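/- Decomposition for the energy harvesting two-hop channel with infinite batteries and α_1, α_2 ∈ [0,1]: the supremum of the sum-throughput Σ_{i=1}^{N} min{ (1/2)·log(1 + h_1 p_{1,i}/σ_2²), (1/2)·log(1 + h_2 p_{2,i}/σ_1²) } over all feasible policies equals the supremum of Σ_{i=1}^{N} (1/2)·log( 1 + h_1 h_2 · min{ (π_{1,i} + α_2 π_{2,i})/(α_2 σ_1² h_1 + σ_2² h_2), (α_1 π_{1,i} + π_{2,i})/(σ_1² h_1 + α_1 σ_2² h_2) } ) over all consumed-power sequences satisfying π_{k,i} ≥ 0 and Σ_{n=1}^{i} π_{k,n} ≤ Σ_{n=1}^{i} E_{k,n} for k = 1,2 and all i. -/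
import Mathlib

/-- Per-slot achievability: from consumed powers construct a policy slot. -/
private lemma eh_ach (h1 h2 s1 s2 a1 a2 π1 π2 : ℝ)
    (hh1 : 0 < h1) (hh2 : 0 < h2) (hs1 : 0 < s1) (hs2 : 0 < s2)
    (ha1 : 0 ≤ a1) (ha1' : a1 ≤ 1) (ha2 : 0 ≤ a2) (ha2' : a2 ≤ 1)
    (hπ1 : 0 ≤ π1) (hπ2 : 0 ≤ π2) :
    ∃ p1 p2 d1 d2 : ℝ, 0 ≤ p1 ∧ 0 ≤ p2 ∧ 0 ≤ d1 ∧ 0 ≤ d2 ∧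
      p1 + d1 - a2 * d2 = π1 ∧ p2 + d2 - a1 * d1 = π2 ∧
      min (1/2 * Real.log (1 + h1 * p1 / s2)) (1/2 * Real.log (1 + h2 * p2 / s1))
        = 1/2 * Real.log (1 + h1 * h2 *
            min ((π1 + a2 * π2) / (a2 * s1 * h1 + s2 * h2))
                ((a1 * π1 + π2) / (s1 * h1 + a1 * s2 * h2))) := by
  have hDA : 0 < a2 * s1 * h1 + s2 * h2 := by positivity
  have hDB : 0 < s1 * h1 + a1 * s2 * h2 := by positivity
  have haa : 0 ≤ 1 - a1 * a2 := by nlinarith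
  by_cases hc : s1 * h1 * π1 ≤ s2 * h2 * π2
  · -- min = A, transfer from node 2 to node 1
    set mA := (π1 + a2 * π2) / (a2 * s1 * h1 + s2 * h2) with hmA
    have hmA0 : 0 ≤ mA := by positivity
    have hABle : mA ≤ (a1 * π1 + π2) / (s1 * h1 + a1 * s2 * h2) := by
      rw [hmA, div_le_div_iff₀ hDA hDB]; nlinarith
    have hmin : min mA ((a1 * π1 + π2) / (s1 * h1 + a1 * s2 * h2)) = mA :=
      min_eq_left hABle
    have hDAm : (a2 * s1 * h1 + s2 * h2) * mA = π1 + a2 * π2 := by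
      rw [hmA, mul_div_cancel₀ _ hDA.ne']
    refine ⟨s2 * h2 * mA, s1 * h1 * mA, 0, π2 - s1 * h1 * mA, by positivity,
      by positivity, le_refl _, ?_, by nlinarith, by ring, ?_⟩
    · -- 0 ≤ π2 - s1*h1*mA
      rw [sub_nonneg, hmA, ← le_div_iff₀' (by positivity : (0:ℝ) < s1 * h1),
        div_le_div_iff₀ hDA (by positivity)]
      nlinarith
    · rw [hmin]
      have e1 : h1 * (s2 * h2 * mA) / s2 = h1 * h2 * mA := by field_simp
      have e2 : h2 * (s1 * h1 * mA) / s1 = h1 * h2 * mA := by field_simp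
      rw [e1, e2, min_self]
  · -- min = B, transfer from node 1 to node 2
    push_neg at hc
    set mB := (a1 * π1 + π2) / (s1 * h1 + a1 * s2 * h2) with hmB
    have hmB0 : 0 ≤ mB := by positivity
    have hABle : mB ≤ (π1 + a2 * π2) / (a2 * s1 * h1 + s2 * h2) := by
      rw [hmB, div_le_div_iff₀ hDB hDA]; nlinarith
    have hmin : min ((π1 + a2 * π2) / (a2 * s1 * h1 + s2 * h2)) mB = mB :=
      min_eq_right hABle
    have hDBm : (s1 * h1 + a1 * s2 * h2) * mB = a1 * π1 + π2 := by
      rw [hmB, mul_div_cancel₀ _ hDB.ne']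
    refine ⟨s2 * h2 * mB, s1 * h1 * mB, π1 - s2 * h2 * mB, 0, by positivity,
      by positivity, ?_, le_refl _, by ring, by nlinarith, ?_⟩
    · rw [sub_nonneg, hmB, ← le_div_iff₀' (by positivity : (0:ℝ) < s2 * h2),
        div_le_div_iff₀ hDB (by positivity)]
      nlinarith
    · rw [hmin]
      have e1 : h1 * (s2 * h2 * mB) / s2 = h1 * h2 * mB := by field_simp
      have e2 : h2 * (s1 * h1 * mB) / s1 = h1 * h2 * mB := by field_simp
      rw [e1, e2, min_self]

private lemma eh_rate_le (h1 h2 s1 s2 a1 a2 p1 p2 π1 π2 : ℝ)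
    (hh1 : 0 < h1) (hh2 : 0 < h2) (hs1 : 0 < s1) (hs2 : 0 < s2)
    (ha1 : 0 ≤ a1) (ha2 : 0 ≤ a2)
    (hp1 : 0 ≤ p1) (hp2 : 0 ≤ p2)
    (hu : p1 + a2 * p2 ≤ π1 + a2 * π2) (hv : a1 * p1 + p2 ≤ a1 * π1 + π2) :
    min (1/2 * Real.log (1 + h1 * p1 / s2)) (1/2 * Real.log (1 + h2 * p2 / s1))
      ≤ 1/2 * Real.log (1 + h1 * h2 *
          min ((π1 + a2 * π2) / (a2 * s1 * h1 + s2 * h2))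
              ((a1 * π1 + π2) / (s1 * h1 + a1 * s2 * h2))) := by
  have hDA : 0 < a2 * s1 * h1 + s2 * h2 := by positivity
  have hDB : 0 < s1 * h1 + a1 * s2 * h2 := by positivity
  set x := h1 * p1 / s2 with hx
  set y := h2 * p2 / s1 with hy
  have hx0 : 0 ≤ x := by positivity
  have hy0 : 0 ≤ y := by positivity
  have hm0 : 0 ≤ min x y := le_min hx0 hy0
  have hxp : h1 * h2 * p1 = s2 * h2 * x := by rw [hx]; field_simp
  have hyp : h1 * h2 * p2 = s1 * h1 * y := by rw [hy]; field_simp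
  have hminx : min x y ≤ x := min_le_left _ _
  have hminy : min x y ≤ y := min_le_right _ _
  have hkey : min x y ≤ h1 * h2 *
      min ((π1 + a2 * π2) / (a2 * s1 * h1 + s2 * h2))
          ((a1 * π1 + π2) / (s1 * h1 + a1 * s2 * h2)) := by
    rw [mul_min_of_nonneg _ _ (by positivity : (0:ℝ) ≤ h1 * h2)]
    refine le_min ?_ ?_
    · rw [← mul_div_assoc, le_div_iff₀ hDA]
      have h1' : min x y * (a2 * s1 * h1 + s2 * h2) ≤ h1 * h2 * (p1 + a2 * p2) := by
        nlinarith [mul_le_mul_of_nonneg_left hminx (le_of_lt (by positivity : (0:ℝ) < s2*h2)),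
          mul_le_mul_of_nonneg_left hminy (mul_nonneg (mul_nonneg ha2 hs1.le) hh1.le)]
      have h2' := mul_le_mul_of_nonneg_left hu (by positivity : (0:ℝ) ≤ h1 * h2)
      linarith
    · rw [← mul_div_assoc, le_div_iff₀ hDB]
      have h1' : min x y * (s1 * h1 + a1 * s2 * h2) ≤ h1 * h2 * (a1 * p1 + p2) := by
        nlinarith [mul_le_mul_of_nonneg_left hminy (le_of_lt (by positivity : (0:ℝ) < s1*h1)),
          mul_le_mul_of_nonneg_left hminx (mul_nonneg (mul_nonneg ha1 hs2.le) hh2.le)]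
      have h2' := mul_le_mul_of_nonneg_left hv (by positivity : (0:ℝ) ≤ h1 * h2)
      linarith
  have hlogmin : min (1/2 * Real.log (1 + x)) (1/2 * Real.log (1 + y))
      = 1/2 * Real.log (1 + min x y) := by
    rcases le_total x y with hxy | hxy
    · rw [min_eq_left hxy, min_eq_left]
      have := Real.log_le_log (by linarith) (by linarith : 1 + x ≤ 1 + y)
      linarith
    · rw [min_eq_right hxy, min_eq_right]
      have := Real.log_le_log (by linarith) (by linarith : 1 + y ≤ 1 + x)
      linarith
  rw [hlogmin]
  have := Real.log_le_log (by linarith : (0:ℝ) < 1 + min x y)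
    (by linarith : 1 + min x y ≤ 1 + h1 * h2 * min ((π1 + a2 * π2) / (a2 * s1 * h1 + s2 * h2)) ((a1 * π1 + π2) / (s1 * h1 + a1 * s2 * h2)))
  linarith

open Finset in
private noncomputable def ehS (a1 a2 : ℝ) (E1 E2 p1 p2 d1 d2 : ℕ → ℝ) :
    ℕ → ℝ × ℝ × ℝ × ℝ
  | 0 => (0, 0, 0, 0)
  | (i+1) =>
    let s := ehS a1 a2 E1 E2 p1 p2 d1 d2 i
    let β1 := s.1 + E1 i - p1 i
    let β2 := s.2.1 + E2 i - p2 i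
    if β1 < 0 then (0, β2 + β1 / a2, s.2.2.1 + d2 i + β1 / a2, s.2.2.2 + d1 i)
    else if β2 < 0 then
      (β1 + β2 / a1, 0, s.2.2.1 + d2 i, s.2.2.2 + d1 i + β2 / a1)
    else (β1, β2, s.2.2.1 + d2 i, s.2.2.2 + d1 i)

private lemma ehS_succ (a1 a2 : ℝ) (E1 E2 p1 p2 d1 d2 : ℕ → ℝ) (i : ℕ) :
    ehS a1 a2 E1 E2 p1 p2 d1 d2 (i+1) =
    (let s := ehS a1 a2 E1 E2 p1 p2 d1 d2 i
     let β1 := s.1 + E1 i - p1 i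
     let β2 := s.2.1 + E2 i - p2 i
     if β1 < 0 then (0, β2 + β1 / a2, s.2.2.1 + d2 i + β1 / a2, s.2.2.2 + d1 i)
     else if β2 < 0 then
       (β1 + β2 / a1, 0, s.2.2.1 + d2 i, s.2.2.2 + d1 i + β2 / a1)
     else (β1, β2, s.2.2.1 + d2 i, s.2.2.2 + d1 i)) := by
  rw [ehS]

set_option maxHeartbeats 2000000 in
open Finset in
/-- Core converse lemma: any feasible policy admits dominating consumed powers. -/
private lemma eh_core (N : ℕ) (E1 E2 p1 p2 d1 d2 : ℕ → ℝ) (a1 a2 : ℝ)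
    (ha1 : 0 ≤ a1) (ha1' : a1 ≤ 1) (ha2 : 0 ≤ a2) (ha2' : a2 ≤ 1)
    (hE : ∀ i < N, 0 ≤ E1 i ∧ 0 ≤ E2 i)
    (hpos : ∀ i < N, 0 ≤ p1 i ∧ 0 ≤ p2 i ∧ 0 ≤ d1 i ∧ 0 ≤ d2 i)
    (hfeas : ∀ i < N,
      0 ≤ ∑ n ∈ range (i+1), (E1 n - p1 n + a2 * d2 n - d1 n) ∧
      0 ≤ ∑ n ∈ range (i+1), (E2 n - p2 n + a1 * d1 n - d2 n)) :
    ∃ π1 π2 : ℕ → ℝ,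
      (∀ i < N, 0 ≤ π1 i ∧ 0 ≤ π2 i ∧
        p1 i + a2 * p2 i ≤ π1 i + a2 * π2 i ∧
        a1 * p1 i + p2 i ≤ a1 * π1 i + π2 i) ∧
      (∀ i < N, ∑ n ∈ range (i+1), π1 n ≤ ∑ n ∈ range (i+1), E1 n ∧
        ∑ n ∈ range (i+1), π2 n ≤ ∑ n ∈ range (i+1), E2 n) := by
  classical
  set S := ehS a1 a2 E1 E2 p1 p2 d1 d2 with hS
  set π1 : ℕ → ℝ := fun i => (S i).1 + E1 i - (S (i+1)).1 with hπ1
  set π2 : ℕ → ℝ := fun i => (S i).2.1 + E2 i - (S (i+1)).2.1 with hπ2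
  set O1 : ℕ → ℝ := fun i => ∑ n ∈ range i, (E1 n - p1 n + a2 * d2 n - d1 n) with hO1
  set O2 : ℕ → ℝ := fun i => ∑ n ∈ range i, (E2 n - p2 n + a1 * d1 n - d2 n) with hO2
  clear_value S π1 π2 O1 O2
  have haa : 0 ≤ 1 - a1 * a2 := by nlinarith
  have key : ∀ i ≤ N,
      (0 ≤ (S i).1 ∧ 0 ≤ (S i).2.1 ∧ 0 ≤ (S i).2.2.1 ∧ 0 ≤ (S i).2.2.2 ∧
       (S i).1 = O1 i - a2 * (S i).2.2.1 + (S i).2.2.2 ∧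
       (S i).2.1 = O2 i + (S i).2.2.1 - a1 * (S i).2.2.2) ∧
      (∀ j < i, 0 ≤ π1 j ∧ 0 ≤ π2 j ∧
        p1 j + a2 * p2 j ≤ π1 j + a2 * π2 j ∧
        a1 * p1 j + p2 j ≤ a1 * π1 j + π2 j) := by
    intro i
    induction i with
    | zero =>
      intro _
      refine ⟨?_, fun j hj => absurd hj (Nat.not_lt_zero j)⟩
      simp [hS, ehS, hO1, hO2]
    | succ i ih =>
      intro hiN
      have hiN' : i < N := hiN
      obtain ⟨⟨hb1, hb2, hA, hB, hI1, hI2⟩, hslots⟩ := ih (Nat.le_of_succ_le hiN)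
      obtain ⟨hE1i, hE2i⟩ := hE i hiN'
      obtain ⟨hp1i, hp2i, hd1i, hd2i⟩ := hpos i hiN'
      obtain ⟨hf1, hf2⟩ := hfeas i hiN'
      have hO1s : O1 (i+1) = O1 i + (E1 i - p1 i + a2 * d2 i - d1 i) := by
        rw [hO1]; exact sum_range_succ _ i
      have hO2s : O2 (i+1) = O2 i + (E2 i - p2 i + a1 * d1 i - d2 i) := by
        rw [hO2]; exact sum_range_succ _ i
      have hfO1 : 0 ≤ O1 (i+1) := by rw [hO1]; exact hf1
      have hfO2 : 0 ≤ O2 (i+1) := by rw [hO2]; exact hf2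
      set b1 := (S i).1 with hb1d
      set b2 := (S i).2.1 with hb2d
      set A := (S i).2.2.1 with hAd
      set B := (S i).2.2.2 with hBd
      set β1 := b1 + E1 i - p1 i with hβ1
      set β2 := b2 + E2 i - p2 i with hβ2
      clear_value b1 b2 A B β1 β2
      have hid1 : β1 + a2 * β2 = O1 (i+1) + a2 * O2 (i+1)
          + (1 - a1 * a2) * d1 i + (1 - a1 * a2) * B := by
        rw [hβ1, hβ2, hI1, hI2, hO1s, hO2s]; ring
      have hid2 : a1 * β1 + β2 = a1 * O1 (i+1) + O2 (i+1)
          + (1 - a1 * a2) * d2 i + (1 - a1 * a2) * A := by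
        rw [hβ1, hβ2, hI1, hI2, hO1s, hO2s]; ring
      have hK1 : 0 ≤ β1 + a2 * β2 := by
        have t1 : 0 ≤ (1 - a1 * a2) * B := mul_nonneg haa hB
        have t2 : 0 ≤ (1 - a1 * a2) * d1 i := mul_nonneg haa hd1i
        have t3 : 0 ≤ a2 * O2 (i+1) := mul_nonneg ha2 hfO2
        linarith [hid1]
      have hK2 : 0 ≤ a1 * β1 + β2 := by
        have t1 : 0 ≤ (1 - a1 * a2) * A := mul_nonneg haa hA
        have t2 : 0 ≤ (1 - a1 * a2) * d2 i := mul_nonneg haa hd2i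
        have t3 : 0 ≤ a1 * O1 (i+1) := mul_nonneg ha1 hfO1
        linarith [hid2]
      have hstep : S (i+1) =
          if β1 < 0 then (0, β2 + β1 / a2, A + d2 i + β1 / a2, B + d1 i)
          else if β2 < 0 then (β1 + β2 / a1, 0, A + d2 i, B + d1 i + β2 / a1)
          else (β1, β2, A + d2 i, B + d1 i) := by
        rw [hβ1, hβ2, hb1d, hb2d, hAd, hBd, hS]
        exact ehS_succ a1 a2 E1 E2 p1 p2 d1 d2 i
      by_cases hc1 : β1 < 0
      · -- node 1 is short; node 2 covers
        have ha2p : 0 < a2 := by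
          rcases lt_or_eq_of_le ha2 with h | h
          · exact h
          · exfalso; rw [← h] at hK1; simp at hK1; linarith
        have hstep' : S (i+1) = (0, β2 + β1 / a2, A + d2 i + β1 / a2, B + d1 i) := by
          rw [hstep, if_pos hc1]
        have e1 : (S (i+1)).1 = 0 := by rw [hstep']
        have e2 : (S (i+1)).2.1 = β2 + β1 / a2 := by rw [hstep']
        have e3 : (S (i+1)).2.2.1 = A + d2 i + β1 / a2 := by rw [hstep']
        have e4 : (S (i+1)).2.2.2 = B + d1 i := by rw [hstep']
        have hdiv : a2 * (β1 / a2) = β1 := by field_simp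
        have hπ1i : π1 i = b1 + E1 i := by rw [hπ1]; simp [e1, ← hb1d]
        have hπ2i : π2 i = p2 i - β1 / a2 := by
          rw [hπ2]; simp only [e2, ← hb2d]; rw [hβ2]; ring
        have hq : β1 / a2 ≤ 0 :=
          div_nonpos_of_nonpos_of_nonneg hc1.le ha2p.le
        refine ⟨⟨?_, ?_, ?_, ?_, ?_, ?_⟩, ?_⟩
        · rw [e1]
        · rw [e2]
          have : β2 + β1 / a2 = (β1 + a2 * β2) / a2 := by field_simp; ring
          rw [this]; exact div_nonneg hK1 ha2p.le
        · rw [e3]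
          have hK3 : 0 ≤ a2 * A + a2 * d2 i + β1 := by
            linarith [hO1s, hI1, hfO1, hβ1, hB, hd1i]
          have : A + d2 i + β1 / a2 = (a2 * A + a2 * d2 i + β1) / a2 := by
            field_simp
          rw [this]; exact div_nonneg hK3 ha2p.le
        · rw [e4]; linarith
        · rw [e1, e3, e4]; linarith [hO1s, hI1, hdiv, hβ1]
        · rw [e2, e3, e4]; linarith [hO2s, hI2, hβ2]
        · intro j hj
          rcases Nat.lt_succ_iff_lt_or_eq.mp hj with h | h
          · exact hslots j h
          · rw [h]
            have hβ1m : a1 * β1 = a1 * b1 + a1 * E1 i - a1 * p1 i := by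
              rw [hβ1]; ring
            have hda : a2 * (p2 i - β1 / a2) = a2 * p2 i - β1 := by
              rw [mul_sub, hdiv]
            refine ⟨by rw [hπ1i]; linarith [hb1, hE1i],
              by rw [hπ2i]; linarith [hq, hp2i], ?_, ?_⟩
            · rw [hπ1i, hπ2i]; linarith [hβ1, hda]
            · rw [hπ1i, hπ2i]
              have h6 : β1 / a2 ≤ β1 := by
                rw [div_le_iff₀ ha2p]; nlinarith [hc1.le]
              have h7 : β1 ≤ a1 * β1 := by nlinarith [hc1.le]
              linarith [h6, h7, hβ1m]
      · push_neg at hc1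
        by_cases hc2 : β2 < 0
        · -- node 2 is short; node 1 covers
          have ha1p : 0 < a1 := by
            rcases lt_or_eq_of_le ha1 with h | h
            · exact h
            · exfalso; rw [← h] at hK2; simp at hK2; linarith
          have hstep' : S (i+1) = (β1 + β2 / a1, 0, A + d2 i, B + d1 i + β2 / a1) := by
            rw [hstep, if_neg (not_lt.mpr hc1), if_pos hc2]
          have e1 : (S (i+1)).1 = β1 + β2 / a1 := by rw [hstep']
          have e2 : (S (i+1)).2.1 = 0 := by rw [hstep']
          have e3 : (S (i+1)).2.2.1 = A + d2 i := by rw [hstep']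
          have e4 : (S (i+1)).2.2.2 = B + d1 i + β2 / a1 := by rw [hstep']
          have hdiv : a1 * (β2 / a1) = β2 := by field_simp
          have hπ1i : π1 i = p1 i - β2 / a1 := by
            rw [hπ1]; simp only [e1, ← hb1d]; rw [hβ1]; ring
          have hπ2i : π2 i = b2 + E2 i := by rw [hπ2]; simp [e2, ← hb2d]
          have hq : β2 / a1 ≤ 0 :=
            div_nonpos_of_nonpos_of_nonneg hc2.le ha1p.le
          refine ⟨⟨?_, ?_, ?_, ?_, ?_, ?_⟩, ?_⟩
          · rw [e1]
            have : β1 + β2 / a1 = (a1 * β1 + β2) / a1 := by field_simp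
            rw [this]; exact div_nonneg hK2 ha1p.le
          · rw [e2]
          · rw [e3]; linarith
          · rw [e4]
            have hK4 : 0 ≤ a1 * B + a1 * d1 i + β2 := by
              linarith [hO2s, hI2, hfO2, hβ2, hA, hd2i]
            have : B + d1 i + β2 / a1 = (a1 * B + a1 * d1 i + β2) / a1 := by
              field_simp
            rw [this]; exact div_nonneg hK4 ha1p.le
          · rw [e1, e3, e4]; linarith [hO1s, hI1, hdiv, hβ1]
          · rw [e2, e3, e4]; linarith [hO2s, hI2, hdiv, hβ2]
          · intro j hj
            rcases Nat.lt_succ_iff_lt_or_eq.mp hj with h | h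
            · exact hslots j h
            · rw [h]
              have hβ2m : a2 * β2 = a2 * b2 + a2 * E2 i - a2 * p2 i := by
                rw [hβ2]; ring
              have hda : a1 * (p1 i - β2 / a1) = a1 * p1 i - β2 := by
                rw [mul_sub, hdiv]
              refine ⟨by rw [hπ1i]; linarith [hq, hp1i],
                by rw [hπ2i]; linarith [hb2, hE2i], ?_, ?_⟩
              · rw [hπ1i, hπ2i]
                have h6 : β2 / a1 ≤ β2 := by
                  rw [div_le_iff₀ ha1p]; nlinarith [hc2.le]
                have h7 : β2 ≤ a2 * β2 := by nlinarith [hc2.le]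
                linarith [h6, h7, hβ2m]
              · rw [hπ1i, hπ2i]; linarith [hβ2, hda]
        · push_neg at hc2
          have hstep' : S (i+1) = (β1, β2, A + d2 i, B + d1 i) := by
            rw [hstep, if_neg (not_lt.mpr hc1), if_neg (not_lt.mpr hc2)]
          have e1 : (S (i+1)).1 = β1 := by rw [hstep']
          have e2 : (S (i+1)).2.1 = β2 := by rw [hstep']
          have e3 : (S (i+1)).2.2.1 = A + d2 i := by rw [hstep']
          have e4 : (S (i+1)).2.2.2 = B + d1 i := by rw [hstep']
          have hπ1i : π1 i = p1 i := by
            rw [hπ1]; simp only [e1, ← hb1d]; rw [hβ1]; ring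
          have hπ2i : π2 i = p2 i := by
            rw [hπ2]; simp only [e2, ← hb2d]; rw [hβ2]; ring
          refine ⟨⟨by rw [e1]; exact hc1, by rw [e2]; exact hc2, by rw [e3]; linarith,
            by rw [e4]; linarith, ?_, ?_⟩, ?_⟩
          · rw [e1, e3, e4]; linarith [hO1s, hI1, hβ1]
          · rw [e2, e3, e4]; linarith [hO2s, hI2, hβ2]
          · intro j hj
            rcases Nat.lt_succ_iff_lt_or_eq.mp hj with h | h
            · exact hslots j h
            · rw [h]
              exact ⟨by rw [hπ1i]; exact hp1i, by rw [hπ2i]; exact hp2i,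
                by rw [hπ1i, hπ2i], by rw [hπ1i, hπ2i]⟩
  -- telescoping prefix sums
  have tele1 : ∀ i, ∑ n ∈ range i, π1 n = (∑ n ∈ range i, E1 n) - (S i).1 := by
    intro i
    induction i with
    | zero => simp [hS, ehS]
    | succ k ihk =>
      rw [sum_range_succ, sum_range_succ, ihk]; simp only [hπ1]; ring
  have tele2 : ∀ i, ∑ n ∈ range i, π2 n = (∑ n ∈ range i, E2 n) - (S i).2.1 := by
    intro i
    induction i with
    | zero => simp [hS, ehS]
    | succ k ihk =>
      rw [sum_range_succ, sum_range_succ, ihk]; simp only [hπ2]; ring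
  refine ⟨π1, π2, (key N le_rfl).2, fun i hi => ?_⟩
  obtain ⟨hb1, hb2, -⟩ := (key (i+1) (Nat.succ_le_of_lt hi)).1
  constructor
  · rw [tele1 (i+1)]; linarith
  · rw [tele2 (i+1)]; linarith

open Finset in
set_option maxHeartbeats 1000000 in
/-- Decomposition for the energy harvesting two-hop channel with
infinite batteries: the optimal sum-throughput over feasible policies equals
the optimum of the consumed-power allocation problem with the reduced per-slot
rate expression. -/
theorem stmt_10
    (N : ℕ) (E1 E2 : ℕ → ℝ) (h1 h2 s1 s2 a1 a2 : ℝ)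
    (hh1 : 0 < h1) (hh2 : 0 < h2) (hs1 : 0 < s1) (hs2 : 0 < s2)
    (ha1 : a1 ∈ Set.Icc (0:ℝ) 1) (ha2 : a2 ∈ Set.Icc (0:ℝ) 1)
    (hE : ∀ i < N, 0 ≤ E1 i ∧ 0 ≤ E2 i) :
    sSup {t : ℝ | ∃ p1 p2 d1 d2 : ℕ → ℝ,
        (∀ i < N, 0 ≤ p1 i ∧ 0 ≤ p2 i ∧ 0 ≤ d1 i ∧ 0 ≤ d2 i) ∧
        (∀ i < N,
          0 ≤ ∑ n ∈ Finset.range (i+1), (E1 n - p1 n + a2 * d2 n - d1 n) ∧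
          0 ≤ ∑ n ∈ Finset.range (i+1), (E2 n - p2 n + a1 * d1 n - d2 n)) ∧
        t = ∑ i ∈ Finset.range N,
          min (1/2 * Real.log (1 + h1 * p1 i / s2))
              (1/2 * Real.log (1 + h2 * p2 i / s1))}
    = sSup {t : ℝ | ∃ π1 π2 : ℕ → ℝ,
        (∀ i < N, 0 ≤ π1 i ∧ 0 ≤ π2 i) ∧
        (∀ i < N,
          ∑ n ∈ Finset.range (i+1), π1 n ≤ ∑ n ∈ Finset.range (i+1), E1 n ∧
          ∑ n ∈ Finset.range (i+1), π2 n ≤ ∑ n ∈ Finset.range (i+1), E2 n) ∧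
        t = ∑ i ∈ Finset.range N,
          1/2 * Real.log (1 + h1 * h2 *
            min ((π1 i + a2 * π2 i) / (a2 * s1 * h1 + s2 * h2))
                ((a1 * π1 i + π2 i) / (s1 * h1 + a1 * s2 * h2)))} := by
  classical
  obtain ⟨ha1l, ha1r⟩ := ha1
  obtain ⟨ha2l, ha2r⟩ := ha2
  have hDA : 0 < a2 * s1 * h1 + s2 * h2 := by positivity
  have hDB : 0 < s1 * h1 + a1 * s2 * h2 := by positivity
  set M1 : ℝ := ∑ i ∈ range N, E1 i with hM1
  set M2 : ℝ := ∑ i ∈ range N, E2 i with hM2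
  have hM1p : 0 ≤ M1 := sum_nonneg fun n hn => (hE n (mem_range.mp hn)).1
  have hM2p : 0 ≤ M2 := sum_nonneg fun n hn => (hE n (mem_range.mp hn)).2
  set C : ℝ := 1/2 * Real.log (1 + h1 * h2 * ((M1 + a2 * M2) / (a2 * s1 * h1 + s2 * h2)))
    with hC
  -- bound on each element of the reduced set
  have hterm : ∀ x y : ℝ, 0 ≤ x → 0 ≤ y → x ≤ M1 → y ≤ M2 →
      1/2 * Real.log (1 + h1 * h2 *
        min ((x + a2 * y) / (a2 * s1 * h1 + s2 * h2))
            ((a1 * x + y) / (s1 * h1 + a1 * s2 * h2))) ≤ C := by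
    intro x y hx hy hxM hyM
    have h0 : 0 ≤ min ((x + a2 * y) / (a2 * s1 * h1 + s2 * h2))
        ((a1 * x + y) / (s1 * h1 + a1 * s2 * h2)) :=
      le_min (by positivity) (by positivity)
    have hle : min ((x + a2 * y) / (a2 * s1 * h1 + s2 * h2))
        ((a1 * x + y) / (s1 * h1 + a1 * s2 * h2))
        ≤ (M1 + a2 * M2) / (a2 * s1 * h1 + s2 * h2) := by
      refine (min_le_left _ _).trans ?_
      exact (div_le_div_iff_of_pos_right hDA).mpr
        (by nlinarith [mul_le_mul_of_nonneg_left hyM ha2l])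
    rw [hC]
    have hlog := Real.log_le_log (by positivity : (0:ℝ) < 1 + h1 * h2 * min _ _)
      (by nlinarith [mul_le_mul_of_nonneg_left hle (by positivity : (0:ℝ) ≤ h1 * h2)] :
        1 + h1 * h2 * min ((x + a2 * y) / (a2 * s1 * h1 + s2 * h2))
            ((a1 * x + y) / (s1 * h1 + a1 * s2 * h2))
          ≤ 1 + h1 * h2 * ((M1 + a2 * M2) / (a2 * s1 * h1 + s2 * h2)))
    linarith
  -- each element of the reduced set is ≤ N * C
  have hTbound : ∀ t ∈ {t : ℝ | ∃ π1 π2 : ℕ → ℝ,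
        (∀ i < N, 0 ≤ π1 i ∧ 0 ≤ π2 i) ∧
        (∀ i < N,
          ∑ n ∈ Finset.range (i+1), π1 n ≤ ∑ n ∈ Finset.range (i+1), E1 n ∧
          ∑ n ∈ Finset.range (i+1), π2 n ≤ ∑ n ∈ Finset.range (i+1), E2 n) ∧
        t = ∑ i ∈ Finset.range N,
          1/2 * Real.log (1 + h1 * h2 *
            min ((π1 i + a2 * π2 i) / (a2 * s1 * h1 + s2 * h2))
                ((a1 * π1 i + π2 i) / (s1 * h1 + a1 * s2 * h2)))},
      t ≤ (N : ℝ) * C := by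
    rintro t ⟨π1, π2, hp, hpre, rfl⟩
    calc ∑ i ∈ range N, 1/2 * Real.log (1 + h1 * h2 *
            min ((π1 i + a2 * π2 i) / (a2 * s1 * h1 + s2 * h2))
                ((a1 * π1 i + π2 i) / (s1 * h1 + a1 * s2 * h2)))
        ≤ ∑ _i ∈ range N, C := by
          refine sum_le_sum fun i hi => ?_
          have hiN := mem_range.mp hi
          have hsub : range (i+1) ⊆ range N := by
            intro n hn
            exact mem_range.mpr (lt_of_lt_of_le (mem_range.mp hn) hiN)
          have hπ1M : π1 i ≤ M1 := by
            have h1' : π1 i ≤ ∑ n ∈ range (i+1), π1 n := by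
              refine single_le_sum (fun n hn => (hp n (lt_of_lt_of_le (mem_range.mp hn) hiN)).1) ?_
              exact self_mem_range_succ i
            have h2' : ∑ n ∈ range (i+1), E1 n ≤ M1 := by
              rw [hM1]
              exact sum_le_sum_of_subset_of_nonneg hsub
                (fun n hn _ => (hE n (mem_range.mp hn)).1)
            linarith [(hpre i hiN).1]
          have hπ2M : π2 i ≤ M2 := by
            have h1' : π2 i ≤ ∑ n ∈ range (i+1), π2 n := by
              refine single_le_sum (fun n hn => (hp n (lt_of_lt_of_le (mem_range.mp hn) hiN)).2) ?_
              exact self_mem_range_succ i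
            have h2' : ∑ n ∈ range (i+1), E2 n ≤ M2 := by
              rw [hM2]
              exact sum_le_sum_of_subset_of_nonneg hsub
                (fun n hn _ => (hE n (mem_range.mp hn)).2)
            linarith [(hpre i hiN).2]
          exact hterm (π1 i) (π2 i) (hp i hiN).1 (hp i hiN).2 hπ1M hπ2M
      _ = (N : ℝ) * C := by rw [sum_const, card_range, nsmul_eq_mul]
  -- domination: every policy value is dominated by a reduced value
  have hdom : ∀ t ∈ {t : ℝ | ∃ p1 p2 d1 d2 : ℕ → ℝ,
        (∀ i < N, 0 ≤ p1 i ∧ 0 ≤ p2 i ∧ 0 ≤ d1 i ∧ 0 ≤ d2 i) ∧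
        (∀ i < N,
          0 ≤ ∑ n ∈ Finset.range (i+1), (E1 n - p1 n + a2 * d2 n - d1 n) ∧
          0 ≤ ∑ n ∈ Finset.range (i+1), (E2 n - p2 n + a1 * d1 n - d2 n)) ∧
        t = ∑ i ∈ Finset.range N,
          min (1/2 * Real.log (1 + h1 * p1 i / s2))
              (1/2 * Real.log (1 + h2 * p2 i / s1))},
      ∃ t' ∈ {t : ℝ | ∃ π1 π2 : ℕ → ℝ,
        (∀ i < N, 0 ≤ π1 i ∧ 0 ≤ π2 i) ∧
        (∀ i < N,
          ∑ n ∈ Finset.range (i+1), π1 n ≤ ∑ n ∈ Finset.range (i+1), E1 n ∧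
          ∑ n ∈ Finset.range (i+1), π2 n ≤ ∑ n ∈ Finset.range (i+1), E2 n) ∧
        t = ∑ i ∈ Finset.range N,
          1/2 * Real.log (1 + h1 * h2 *
            min ((π1 i + a2 * π2 i) / (a2 * s1 * h1 + s2 * h2))
                ((a1 * π1 i + π2 i) / (s1 * h1 + a1 * s2 * h2)))}, t ≤ t' := by
    rintro t ⟨p1, p2, d1, d2, hp, hfeas, rfl⟩
    obtain ⟨π1, π2, hslot, hpre⟩ :=
      eh_core N E1 E2 p1 p2 d1 d2 a1 a2 ha1l ha1r ha2l ha2r hE hp hfeas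
    refine ⟨∑ i ∈ Finset.range N,
        1/2 * Real.log (1 + h1 * h2 *
          min ((π1 i + a2 * π2 i) / (a2 * s1 * h1 + s2 * h2))
              ((a1 * π1 i + π2 i) / (s1 * h1 + a1 * s2 * h2))),
      ⟨π1, π2, fun i hi => ⟨(hslot i hi).1, (hslot i hi).2.1⟩, hpre, rfl⟩, ?_⟩
    refine sum_le_sum fun i hi => ?_
    have hiN := mem_range.mp hi
    exact eh_rate_le h1 h2 s1 s2 a1 a2 (p1 i) (p2 i) (π1 i) (π2 i)
      hh1 hh2 hs1 hs2 ha1l ha2l (hp i hiN).1 (hp i hiN).2.1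
      (hslot i hiN).2.2.1 (hslot i hiN).2.2.2
  -- inclusion: every reduced value is achieved by a policy
  have hsubset : {t : ℝ | ∃ π1 π2 : ℕ → ℝ,
        (∀ i < N, 0 ≤ π1 i ∧ 0 ≤ π2 i) ∧
        (∀ i < N,
          ∑ n ∈ Finset.range (i+1), π1 n ≤ ∑ n ∈ Finset.range (i+1), E1 n ∧
          ∑ n ∈ Finset.range (i+1), π2 n ≤ ∑ n ∈ Finset.range (i+1), E2 n) ∧
        t = ∑ i ∈ Finset.range N,
          1/2 * Real.log (1 + h1 * h2 *
            min ((π1 i + a2 * π2 i) / (a2 * s1 * h1 + s2 * h2))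
                ((a1 * π1 i + π2 i) / (s1 * h1 + a1 * s2 * h2)))}
      ⊆ {t : ℝ | ∃ p1 p2 d1 d2 : ℕ → ℝ,
        (∀ i < N, 0 ≤ p1 i ∧ 0 ≤ p2 i ∧ 0 ≤ d1 i ∧ 0 ≤ d2 i) ∧
        (∀ i < N,
          0 ≤ ∑ n ∈ Finset.range (i+1), (E1 n - p1 n + a2 * d2 n - d1 n) ∧
          0 ≤ ∑ n ∈ Finset.range (i+1), (E2 n - p2 n + a1 * d1 n - d2 n)) ∧
        t = ∑ i ∈ Finset.range N,
          min (1/2 * Real.log (1 + h1 * p1 i / s2))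
              (1/2 * Real.log (1 + h2 * p2 i / s1))} := by
    rintro t ⟨π1, π2, hπp, hπpre, rfl⟩
    have hex : ∀ i, ∃ q1 q2 e1 e2 : ℝ, 0 ≤ q1 ∧ 0 ≤ q2 ∧ 0 ≤ e1 ∧ 0 ≤ e2 ∧
        (i < N → (q1 + e1 - a2 * e2 = π1 i ∧ q2 + e2 - a1 * e1 = π2 i ∧
          min (1/2 * Real.log (1 + h1 * q1 / s2)) (1/2 * Real.log (1 + h2 * q2 / s1))
            = 1/2 * Real.log (1 + h1 * h2 *
                min ((π1 i + a2 * π2 i) / (a2 * s1 * h1 + s2 * h2))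
                    ((a1 * π1 i + π2 i) / (s1 * h1 + a1 * s2 * h2))))) := by
      intro i
      by_cases hi : i < N
      · obtain ⟨q1, q2, e1, e2, h1', h2', h3', h4', h5', h6', h7'⟩ :=
          eh_ach h1 h2 s1 s2 a1 a2 (π1 i) (π2 i) hh1 hh2 hs1 hs2
            ha1l ha1r ha2l ha2r (hπp i hi).1 (hπp i hi).2
        exact ⟨q1, q2, e1, e2, h1', h2', h3', h4', fun _ => ⟨h5', h6', h7'⟩⟩
      · exact ⟨0, 0, 0, 0, le_rfl, le_rfl, le_rfl, le_rfl, fun h => absurd h hi⟩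
    choose q1 q2 e1 e2 hq1 hq2 he1 he2 hP using hex
    refine ⟨q1, q2, e1, e2, fun i hi => ⟨hq1 i, hq2 i, he1 i, he2 i⟩,
      fun i hi => ⟨?_, ?_⟩, ?_⟩
    · have hcong : ∑ n ∈ range (i+1), (E1 n - q1 n + a2 * e2 n - e1 n)
          = ∑ n ∈ range (i+1), (E1 n - π1 n) := by
        refine sum_congr rfl fun n hn => ?_
        have hnN : n < N := lt_of_lt_of_le (mem_range.mp hn) hi
        have := (hP n hnN).1
        linarith
      rw [hcong, sum_sub_distrib]
      linarith [(hπpre i hi).1]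
    · have hcong : ∑ n ∈ range (i+1), (E2 n - q2 n + a1 * e1 n - e2 n)
          = ∑ n ∈ range (i+1), (E2 n - π2 n) := by
        refine sum_congr rfl fun n hn => ?_
        have hnN : n < N := lt_of_lt_of_le (mem_range.mp hn) hi
        have := (hP n hnN).2.1
        linarith
      rw [hcong, sum_sub_distrib]
      linarith [(hπpre i hi).2]
    · exact (sum_congr rfl fun i hi => (hP i (mem_range.mp hi)).2.2).symm
  -- nonemptiness
  have hSne : {t : ℝ | ∃ p1 p2 d1 d2 : ℕ → ℝ,
        (∀ i < N, 0 ≤ p1 i ∧ 0 ≤ p2 i ∧ 0 ≤ d1 i ∧ 0 ≤ d2 i) ∧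
        (∀ i < N,
          0 ≤ ∑ n ∈ Finset.range (i+1), (E1 n - p1 n + a2 * d2 n - d1 n) ∧
          0 ≤ ∑ n ∈ Finset.range (i+1), (E2 n - p2 n + a1 * d1 n - d2 n)) ∧
        t = ∑ i ∈ Finset.range N,
          min (1/2 * Real.log (1 + h1 * p1 i / s2))
              (1/2 * Real.log (1 + h2 * p2 i / s1))}.Nonempty := by
    refine ⟨_, fun _ => 0, fun _ => 0, fun _ => 0, fun _ => 0,
      fun i hi => ⟨le_rfl, le_rfl, le_rfl, le_rfl⟩, fun i hi => ⟨?_, ?_⟩, rfl⟩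
    · simpa using sum_nonneg fun n hn =>
        (hE n (lt_of_lt_of_le (mem_range.mp hn) hi)).1
    · simpa using sum_nonneg fun n hn =>
        (hE n (lt_of_lt_of_le (mem_range.mp hn) hi)).2
  have hTne : {t : ℝ | ∃ π1 π2 : ℕ → ℝ,
        (∀ i < N, 0 ≤ π1 i ∧ 0 ≤ π2 i) ∧
        (∀ i < N,
          ∑ n ∈ Finset.range (i+1), π1 n ≤ ∑ n ∈ Finset.range (i+1), E1 n ∧
          ∑ n ∈ Finset.range (i+1), π2 n ≤ ∑ n ∈ Finset.range (i+1), E2 n) ∧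
        t = ∑ i ∈ Finset.range N,
          1/2 * Real.log (1 + h1 * h2 *
            min ((π1 i + a2 * π2 i) / (a2 * s1 * h1 + s2 * h2))
                ((a1 * π1 i + π2 i) / (s1 * h1 + a1 * s2 * h2)))}.Nonempty := by
    refine ⟨_, fun _ => 0, fun _ => 0,
      fun i hi => ⟨le_rfl, le_rfl⟩, fun i hi => ⟨?_, ?_⟩, rfl⟩
    · simpa using sum_nonneg fun n hn =>
        (hE n (lt_of_lt_of_le (mem_range.mp hn) hi)).1
    · simpa using sum_nonneg fun n hn =>
        (hE n (lt_of_lt_of_le (mem_range.mp hn) hi)).2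
  have hbddT : BddAbove {t : ℝ | ∃ π1 π2 : ℕ → ℝ,
        (∀ i < N, 0 ≤ π1 i ∧ 0 ≤ π2 i) ∧
        (∀ i < N,
          ∑ n ∈ Finset.range (i+1), π1 n ≤ ∑ n ∈ Finset.range (i+1), E1 n ∧
          ∑ n ∈ Finset.range (i+1), π2 n ≤ ∑ n ∈ Finset.range (i+1), E2 n) ∧
        t = ∑ i ∈ Finset.range N,
          1/2 * Real.log (1 + h1 * h2 *
            min ((π1 i + a2 * π2 i) / (a2 * s1 * h1 + s2 * h2))
                ((a1 * π1 i + π2 i) / (s1 * h1 + a1 * s2 * h2)))} :=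
    ⟨(N : ℝ) * C, fun t ht => hTbound t ht⟩
  have hbddS : BddAbove {t : ℝ | ∃ p1 p2 d1 d2 : ℕ → ℝ,
        (∀ i < N, 0 ≤ p1 i ∧ 0 ≤ p2 i ∧ 0 ≤ d1 i ∧ 0 ≤ d2 i) ∧
        (∀ i < N,
          0 ≤ ∑ n ∈ Finset.range (i+1), (E1 n - p1 n + a2 * d2 n - d1 n) ∧
          0 ≤ ∑ n ∈ Finset.range (i+1), (E2 n - p2 n + a1 * d1 n - d2 n)) ∧
        t = ∑ i ∈ Finset.range N,
          min (1/2 * Real.log (1 + h1 * p1 i / s2))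
              (1/2 * Real.log (1 + h2 * p2 i / s1))} := by
    refine ⟨(N : ℝ) * C, fun t ht => ?_⟩
    obtain ⟨t', ht', hle⟩ := hdom t ht
    exact hle.trans (hTbound t' ht')
  apply le_antisymm
  · refine csSup_le hSne fun t ht => ?_
    obtain ⟨t', ht', hle⟩ := hdom t ht
    exact hle.trans (le_csSup hbddT ht')
  · exact csSup_le hTne fun t ht => le_csSup hbddS (hsubset ht)
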